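/- arXiv:2003.01086 — 2 statements merged into one kernel-verified Lean document; each statement's English description precedes it below -/
import Mathlib

section
/- Let X, Y, A, B be nonempty finite types, let p be a strictly positive probability mass function on X × Y, and let e : X → A and f : Y → B. Let r(a|b) be the conditional pmf of a = e(x) given b = f(y) under the pushforward of p, and define the model q(y|x) = p_Y(y)·r(e(x)|f(y)) / Σ_{y'} p_Y(y')·r(e(x)|f(y')). Then the predictive loss of q equals the mutual information gap: Σ_x p_X(x) · KL(p(·|x) ‖ q(·|x)) = I(X;Y) − I(e(X); f(Y)). -/
/-!
Grouping the normaliser `Z(x) = ∑_y p_Y(y) r(e x | f y)` by the value `b = f y` turns it into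
`∑_b π_B(b) r(e x | b) = π_A(e x)`, where `π` is the pushforward pmf. Hence `p(y|x) / q(y|x)` is
the quotient of the dependence ratios `p(x,y) / (p_X(x) p_Y(y))` and
`π(e x, f y) / (π_A(e x) π_B(f y))`. Averaging the logarithm against `p` gives `I(X;Y)` minus the
`p`-average of `log` of the second ratio, and by change of variables that average is
`I(e(X); f(Y))`.
-/

open Finset
open scoped Classical

noncomputable section

variable {X Y A B : Type*} [Fintype X] [Fintype Y] [Fintype A] [Fintype B]

/-- Marginal of the first coordinate. -/
def margX (p : X × Y → ℝ) (x : X) : ℝ := ∑ y, p (x, y)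

/-- Marginal of the second coordinate. -/
def margY (p : X × Y → ℝ) (y : Y) : ℝ := ∑ x, p (x, y)

/-- Conditional pmf of `y` given `x`. -/
def condYX (p : X × Y → ℝ) (y : Y) (x : X) : ℝ := p (x, y) / margX p x

/-- KL divergence between two pmfs on a finite type. -/
def klPmf (f g : Y → ℝ) : ℝ := ∑ y, f y * Real.log (f y / g y)

/-- Mutual information between the two coordinates of a pmf on a product of
finite types (terms with zero mass contribute `0`, since `Real.log 0 = 0`). -/
def mutualInfo (p : X × Y → ℝ) : ℝ :=
  ∑ x, ∑ y, p (x, y) * Real.log (p (x, y) / (margX p x * margY p y))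

/-- Pushforward pmf of `p` under `(x, y) ↦ (e x, f y)`. -/
def pushPmf (p : X × Y → ℝ) (e : X → A) (f : Y → B) : A × B → ℝ :=
  fun ab => ∑ x, ∑ y, if e x = ab.1 ∧ f y = ab.2 then p (x, y) else 0

/-- Conditional pmf of `a = e a` given `b = f y` under the pushforward of `p`. -/
def condPush (p : X × Y → ℝ) (e : X → A) (f : Y → B) (a : A) (b : B) : ℝ :=
  pushPmf p e f (a, b) / ∑ a', pushPmf p e f (a', b)

/-- The model `q(y|x) ∝ p_Y(y)·r(e x | f y)`. -/
def qOpt (p : X × Y → ℝ) (e : X → A) (f : Y → B) (y : Y) (x : X) : ℝ :=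
  margY p y * condPush p e f (e x) (f y) /
    ∑ y', margY p y' * condPush p e f (e x) (f y')

def dependenceRatio (p : X × Y → ℝ) (x : X) (y : Y) : ℝ :=
  p (x, y) / (margX p x * margY p y)

section Marginals

variable {p : X × Y → ℝ}

omit [Fintype X] in
theorem le_margX (hp : 0 ≤ p) (x : X) (y : Y) : p (x, y) ≤ margX p x :=
  single_le_sum (f := fun y => p (x, y)) (fun y _ => hp (x, y)) (mem_univ y)

omit [Fintype Y] in
theorem le_margY (hp : 0 ≤ p) (x : X) (y : Y) : p (x, y) ≤ margY p y :=
  single_le_sum (f := fun x => p (x, y)) (fun x _ => hp (x, y)) (mem_univ x)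

omit [Fintype X] in
theorem margX_mul_condYX (hp : 0 ≤ p) (x : X) (y : Y) : margX p x * condYX p y x = p (x, y) :=
  mul_div_cancel_of_imp' fun h => le_antisymm (h ▸ le_margX hp x y) (hp (x, y))

omit [Fintype Y] in
theorem margY_mul_div_margY (hp : 0 ≤ p) (x : X) (y : Y) :
    margY p y * (p (x, y) / margY p y) = p (x, y) :=
  mul_div_cancel_of_imp' fun h => le_antisymm (h ▸ le_margY hp x y) (hp (x, y))

theorem dependenceRatio_pos (hp : 0 ≤ p) {x : X} {y : Y} (hxy : 0 < p (x, y)) :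
    0 < dependenceRatio p x y :=
  div_pos hxy (mul_pos (hxy.trans_le (le_margX hp x y)) (hxy.trans_le (le_margY hp x y)))

omit [Fintype X] in
theorem margX_mul_klPmf_condYX (hp : 0 ≤ p) (x : X) (g : Y → ℝ) :
    margX p x * klPmf (fun y => condYX p y x) g
      = ∑ y, p (x, y) * Real.log (condYX p y x / g y) := by
  simp only [klPmf, mul_sum, ← mul_assoc, margX_mul_condYX hp]

end Marginals

section Pushforward

theorem sum_pushPmf_mul (p : X × Y → ℝ) (e : X → A) (f : Y → B) (L : A → B → ℝ) :
    ∑ a, ∑ b, pushPmf p e f (a, b) * L a b = ∑ x, ∑ y, p (x, y) * L (e x) (f y) := by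
  simp only [pushPmf, sum_mul, ite_mul, zero_mul]
  simp_rw [sum_comm (s := (univ : Finset B)), sum_comm (s := (univ : Finset A))]
  simp only [ite_and, sum_ite_eq, mem_univ, if_true]

omit [Fintype A] [Fintype B] in
theorem pushPmf_nonneg {p : X × Y → ℝ} (hp : 0 ≤ p) (e : X → A) (f : Y → B) : 0 ≤ pushPmf p e f :=
  fun _ => sum_nonneg fun _ _ => sum_nonneg fun _ _ => ite_nonneg (hp _) le_rfl

omit [Fintype A] [Fintype B] in
theorem le_pushPmf {p : X × Y → ℝ} (hp : 0 ≤ p) (e : X → A) (f : Y → B) (x : X) (y : Y) :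
    p (x, y) ≤ pushPmf p e f (e x, f y) := by
  have hterm : ∀ x' y', 0 ≤ if e x' = e x ∧ f y' = f y then p (x', y') else 0 :=
    fun _ _ => ite_nonneg (hp _) le_rfl
  calc p (x, y) = if e x = e x ∧ f y = f y then p (x, y) else 0 := by simp
    _ ≤ ∑ y', if e x = e x ∧ f y' = f y then p (x, y') else 0 :=
      single_le_sum (f := fun y' => _) (fun y' _ => hterm x y') (mem_univ y)
    _ ≤ pushPmf p e f (e x, f y) :=
      single_le_sum (f := fun x' => ∑ y', _) (fun x' _ => sum_nonneg fun y' _ => hterm x' y')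
        (mem_univ x)

omit [Fintype B] in
theorem margY_pushPmf (p : X × Y → ℝ) (e : X → A) (f : Y → B) (b : B) :
    margY (pushPmf p e f) b = ∑ y with f y = b, margY p y := by
  simp only [margY, pushPmf, sum_filter, ite_and]
  simp_rw [sum_comm (s := (univ : Finset A))]
  simp only [sum_ite_eq, mem_univ, if_true]
  rw [sum_comm]
  refine sum_congr rfl fun y _ => ?_
  split_ifs <;> simp

omit [Fintype B] in
theorem condPush_eq_div_margY (p : X × Y → ℝ) (e : X → A) (f : Y → B) (a : A) (b : B) :
    condPush p e f a b = pushPmf p e f (a, b) / margY (pushPmf p e f) b :=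
  rfl

theorem sum_margY_mul_condPush {p : X × Y → ℝ} (hp : 0 ≤ p) (e : X → A) (f : Y → B) (a : A) :
    ∑ y, margY p y * condPush p e f a (f y) = margX (pushPmf p e f) a := by
  calc ∑ y, margY p y * condPush p e f a (f y)
      = ∑ b, ∑ y with f y = b, margY p y * condPush p e f a (f y) :=
        (sum_fiberwise univ f _).symm
    _ = ∑ b, margY (pushPmf p e f) b * condPush p e f a b := by
        refine sum_congr rfl fun b _ => ?_
        rw [margY_pushPmf, sum_mul]
        exact sum_congr rfl fun y hy => by rw [(mem_filter.1 hy).2]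
    _ = margX (pushPmf p e f) a :=
        sum_congr rfl fun b _ => margY_mul_div_margY (pushPmf_nonneg hp e f) a b

theorem mutualInfo_pushPmf (p : X × Y → ℝ) (e : X → A) (f : Y → B) :
    mutualInfo (pushPmf p e f)
      = ∑ x, ∑ y, p (x, y) * Real.log (dependenceRatio (pushPmf p e f) (e x) (f y)) :=
  sum_pushPmf_mul p e f _

end Pushforward

theorem condYX_div_qOpt {p : X × Y → ℝ} (hp : 0 ≤ p) (e : X → A) (f : Y → B) {x : X} {y : Y}
    (hxy : 0 < p (x, y)) :
    condYX p y x / qOpt p e f y x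
      = dependenceRatio p x y / dependenceRatio (pushPmf p e f) (e x) (f y) := by
  have hπ : 0 < pushPmf p e f (e x, f y) := hxy.trans_le (le_pushPmf hp e f x y)
  have hπA := hπ.trans_le (le_margX (pushPmf_nonneg hp e f) (e x) (f y))
  have hπB := hπ.trans_le (le_margY (pushPmf_nonneg hp e f) (e x) (f y))
  have hpX := hxy.trans_le (le_margX hp x y)
  have hpY := hxy.trans_le (le_margY hp x y)
  rw [condYX, qOpt, sum_margY_mul_condPush hp, condPush_eq_div_margY, dependenceRatio,
    dependenceRatio]
  field_simp

theorem predictive_loss_eq_mutual_information_gap_general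
    (p : X × Y → ℝ) (hpos : ∀ xy, 0 < p xy)
    (e : X → A) (f : Y → B) :
    ∑ x, margX p x * klPmf (fun y => condYX p y x) (fun y => qOpt p e f y x)
      = mutualInfo p - mutualInfo (pushPmf p e f) := by
  have hp : 0 ≤ p := fun xy => (hpos xy).le
  calc ∑ x, margX p x * klPmf (fun y => condYX p y x) (fun y => qOpt p e f y x)
      = ∑ x, ∑ y, p (x, y) * Real.log (condYX p y x / qOpt p e f y x) :=
        sum_congr rfl fun x _ => margX_mul_klPmf_condYX hp x _
    _ = ∑ x, ∑ y, (p (x, y) * Real.log (dependenceRatio p x y)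
          - p (x, y) * Real.log (dependenceRatio (pushPmf p e f) (e x) (f y))) := by
        refine sum_congr rfl fun x _ => sum_congr rfl fun y _ => ?_
        have hπ := (hpos (x, y)).trans_le (le_pushPmf hp e f x y)
        rw [condYX_div_qOpt hp e f (hpos _), Real.log_div (dependenceRatio_pos hp (hpos _)).ne'
          (dependenceRatio_pos (pushPmf_nonneg hp e f) hπ).ne', mul_sub]
    _ = mutualInfo p - mutualInfo (pushPmf p e f) := by
        simp only [sum_sub_distrib, mutualInfo_pushPmf]
        rfl

theorem predictive_loss_eq_mutual_information_gap
    [Nonempty X] [Nonempty Y] [Nonempty A] [Nonempty B]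
    (p : X × Y → ℝ) (hpos : ∀ xy, 0 < p xy) (hsum : ∑ xy, p xy = 1)
    (e : X → A) (f : Y → B) :
    ∑ x, margX p x * klPmf (fun y => condYX p y x) (fun y => qOpt p e f y x)
      = mutualInfo p - mutualInfo (pushPmf p e f) :=
  predictive_loss_eq_mutual_information_gap_general p hpos e f

end
end

section
/- Let X, U, Z be measurable spaces, and let P be a Markov kernel from X × U to X, Enc a Markov kernel from X to Z, and F a Markov kernel from Z × U to Z. Fix a horizon T ≥ 1, an initial observation x₀ ∈ X, a control sequence u : {0,…,T−1} → U, and a measurable latent cost c̄ : Z × U → ℝ with 0 ≤ c̄ ≤ c_max. Define observation marginals ρ_0 = δ_{x₀}, ρ_{t+1} = ρ_t.bind( x ↦ P(x, u_t) ), and latent-model marginals κ_0 = Enc(x₀), κ_{t+1} = κ_t.bind( z ↦ F(z, u_t) ). Let L_obs = Σ_{t=0}^{T−1} ∫ ( ∫ c̄(z, u_t) d(Enc(x))(z) ) dρ_t(x) and L_lat = Σ_{t=0}^{T−1} ∫ c̄(z, u_t) dκ_t(z). Then, assuming the maps x ↦ tv( (P(x,u_t)).bind(Enc), (Enc(x)).bind(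 z ↦ F(z,u_t) ) ) are measurable, |L_lat − L_obs| ≤ T · c_max · Σ_{t=0}^{T−1} ∫ tv( (P(x,u_t)).bind(Enc), (Enc(x)).bind( z ↦ F(z,u_t) ) ) dρ_t(x). -/
/-!
Write `νₜ = Enc ∘ₘ ρₜ` for the encoded observation marginals. Since `νₜ₊₁ = Enc ∘ₘ Pₜ ∘ₘ ρₜ`
while `κₜ₊₁ = Fₜ ∘ₘ κₜ`, passing through `Fₜ ∘ₘ Enc ∘ₘ ρₜ` and using that a Markov kernel does not
increase total variation gives `tv κₜ₊₁ νₜ₊₁ ≤ tv κₜ νₜ + εₜ`, where `εₜ` is the `ρₜ`-average of the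
one-step consistency error. As `κ₀ = ν₀`, this yields `tv κₜ νₜ ≤ ∑_{s<T} εₛ` for every `t < T`.
A cost with values in `[0, cmax]` has expectations under `κₜ` and `νₜ` differing by at most
`cmax · tv κₜ νₜ`, and summing the `T` per-step gaps gives the bound.
-/

open MeasureTheory ProbabilityTheory

/-- Total variation distance between two measures:
`sup` over measurable sets `s` of `|μ s − ν s|`. -/
noncomputable def tv {α : Type*} [MeasurableSpace α] (μ ν : Measure α) : ℝ :=
  ⨆ s : {s : Set α // MeasurableSet s}, |(μ s).toReal - (ν s).toReal|

open Set

section TotalVariation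

variable {α : Type*} [MeasurableSpace α] (μ ν ξ : Measure α)

instance : Nonempty {s : Set α // MeasurableSet s} := ⟨⟨∅, .empty⟩⟩

lemma tv_le_of_forall_abs_measureReal_sub_le {c : ℝ}
    (h : ∀ s, MeasurableSet s → |μ.real s - ν.real s| ≤ c) : tv μ ν ≤ c :=
  ciSup_le fun s => h s s.2

@[simp]
lemma tv_self : tv μ μ = 0 := by simp [tv]

lemma tv_comm : tv μ ν = tv ν μ := by
  unfold tv
  congr with s
  exact abs_sub_comm _ _

lemma tv_nonneg : 0 ≤ tv μ ν :=
  Real.iSup_nonneg fun _ => abs_nonneg _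

variable [IsProbabilityMeasure μ] [IsProbabilityMeasure ν] [IsProbabilityMeasure ξ]

lemma abs_measureReal_sub_le_one (s : Set α) : |μ.real s - ν.real s| ≤ 1 :=
  abs_sub_le_of_nonneg_of_le measureReal_nonneg measureReal_le_one measureReal_nonneg
    measureReal_le_one

lemma abs_measureReal_sub_le_tv {s : Set α} (hs : MeasurableSet s) :
    |μ.real s - ν.real s| ≤ tv μ ν :=
  le_ciSup (f := fun s : {s : Set α // MeasurableSet s} => |μ.real s - ν.real s|)
    ⟨1, forall_mem_range.2 fun s => abs_measureReal_sub_le_one μ ν s⟩ ⟨s, hs⟩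

lemma tv_le_one : tv μ ν ≤ 1 :=
  tv_le_of_forall_abs_measureReal_sub_le μ ν fun s _ => abs_measureReal_sub_le_one μ ν s

lemma tv_triangle : tv μ ξ ≤ tv μ ν + tv ν ξ :=
  tv_le_of_forall_abs_measureReal_sub_le μ ξ fun _ hs => (abs_sub_le _ _ _).trans
    (add_le_add (abs_measureReal_sub_le_tv μ ν hs) (abs_measureReal_sub_le_tv ν ξ hs))

/-- Layer cake: both integrals are `∫ t in (0, M], m {f ≥ t}`, and the integrands differ by at
most `tv μ ν` pointwise. -/
lemma abs_integral_sub_integral_le_mul_tv {f : α → ℝ} (hf : Measurable f) {M : ℝ}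
    (hf₀ : ∀ a, 0 ≤ f a) (hfM : ∀ a, f a ≤ M) :
    |∫ a, f a ∂μ - ∫ a, f a ∂ν| ≤ M * tv μ ν := by
  have hM : 0 ≤ M := (hf₀ _).trans (hfM (nonempty_of_isProbabilityMeasure μ).some)
  have layer_cake (m : Measure α) [IsProbabilityMeasure m] :
      ∫ a, f a ∂m = ∫ t in Ioc 0 M, m.real {a | t ≤ f a} := by
    refine (Integrable.of_bound hf.aestronglyMeasurable M (ae_of_all _ fun a => ?_))
      |>.integral_eq_integral_Ioc_meas_le (ae_of_all _ hf₀) (ae_of_all _ hfM)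
    rw [Real.norm_of_nonneg (hf₀ a)]
    exact hfM a
  have integrable_tail (m : Measure α) [IsProbabilityMeasure m] :
      IntegrableOn (fun t => m.real {a | t ≤ f a}) (Ioc 0 M) := by
    refine Integrable.of_bound ?_ 1 (ae_of_all _ fun t => ?_)
    · refine (Antitone.measurable fun s t hst => ?_).aestronglyMeasurable
      exact measureReal_mono fun a (ha : t ≤ f a) => hst.trans ha
    · rw [Real.norm_of_nonneg measureReal_nonneg]
      exact measureReal_le_one
  rw [layer_cake μ, layer_cake ν, ← integral_sub (integrable_tail μ) (integrable_tail ν)]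
  calc |_| = ‖_‖ := (Real.norm_eq_abs _).symm
    _ ≤ tv μ ν * volume.real (Ioc 0 M) :=
        norm_setIntegral_le_of_norm_le_const measure_Ioc_lt_top fun t _ =>
          abs_measureReal_sub_le_tv μ ν (measurableSet_le measurable_const hf)
    _ = M * tv μ ν := by simp [hM, mul_comm]

end TotalVariation

section Kernel

variable {α β : Type*} [MeasurableSpace α] [MeasurableSpace β]

lemma ProbabilityTheory.Kernel.measurable_measureReal (κ : Kernel α β) {s : Set β}
    (hs : MeasurableSet s) :
    Measurable fun a => (κ a).real s :=
  (κ.measurable_coe hs).ennreal_toReal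

lemma measureReal_comp_eq_integral (μ : Measure α) (κ : Kernel α β) [IsFiniteKernel κ]
    {s : Set β} (hs : MeasurableSet s) : (κ ∘ₘ μ).real s = ∫ a, (κ a).real s ∂μ := by
  rw [measureReal_def, Measure.bind_apply hs κ.aemeasurable]
  exact (integral_toReal (κ.measurable_coe hs).aemeasurable
    (ae_of_all _ fun a => measure_lt_top _ _)).symm

lemma integral_comp_eq_integral_integral {E : Type*} [NormedAddCommGroup E] [NormedSpace ℝ E]
    (μ : Measure α) [SFinite μ] (κ : Kernel α β) [IsSFiniteKernel κ] {f : β → E}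
    (hf : Integrable f (κ ∘ₘ μ)) : ∫ b, f b ∂(κ ∘ₘ μ) = ∫ a, ∫ b, f b ∂κ a ∂μ := by
  rw [Measure.comp_eq_comp_const_apply] at hf ⊢
  exact Kernel.integral_comp hf

lemma tv_comp_le_tv (μ ν : Measure α) [IsProbabilityMeasure μ] [IsProbabilityMeasure ν]
    (κ : Kernel α β) [IsMarkovKernel κ] : tv (κ ∘ₘ μ) (κ ∘ₘ ν) ≤ tv μ ν := by
  refine tv_le_of_forall_abs_measureReal_sub_le _ _ fun s hs => ?_
  rw [measureReal_comp_eq_integral μ κ hs, measureReal_comp_eq_integral ν κ hs]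
  simpa using abs_integral_sub_integral_le_mul_tv μ ν (κ.measurable_measureReal hs)
    (fun _ => measureReal_nonneg) (fun _ => measureReal_le_one)

lemma tv_comp_le_integral_tv (μ : Measure α) [IsFiniteMeasure μ] (κ η : Kernel α β)
    [IsMarkovKernel κ] [IsMarkovKernel η] (hm : Measurable fun a => tv (κ a) (η a)) :
    tv (κ ∘ₘ μ) (η ∘ₘ μ) ≤ ∫ a, tv (κ a) (η a) ∂μ := by
  refine tv_le_of_forall_abs_measureReal_sub_le _ _ fun s hs => ?_
  have integrable (θ : Kernel α β) [IsMarkovKernel θ] : Integrable (fun a => (θ a).real s) μ :=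
    .of_bound (θ.measurable_measureReal hs).aestronglyMeasurable 1 <| ae_of_all _ fun a => by
      rw [Real.norm_of_nonneg measureReal_nonneg]
      exact measureReal_le_one
  rw [measureReal_comp_eq_integral μ κ hs, measureReal_comp_eq_integral μ η hs,
    ← integral_sub (integrable κ) (integrable η)]
  calc |_| = ‖_‖ := (Real.norm_eq_abs _).symm
    _ ≤ _ := by
      refine norm_integral_le_of_norm_le ?_ (ae_of_all _ fun a => abs_measureReal_sub_le_tv _ _ hs)
      refine .of_bound hm.aestronglyMeasurable 1 (ae_of_all _ fun a => ?_)
      rw [Real.norm_of_nonneg (tv_nonneg _ _)]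
      exact tv_le_one _ _

lemma abs_integral_sub_integral_integral_le_mul_tv (κ : Measure β) (μ : Measure α)
    [IsProbabilityMeasure κ] [IsProbabilityMeasure μ] (E : Kernel α β) [IsMarkovKernel E]
    {f : β → ℝ} (hf : Measurable f) {M : ℝ} (hf₀ : ∀ b, 0 ≤ f b) (hfM : ∀ b, f b ≤ M) :
    |∫ b, f b ∂κ - ∫ a, ∫ b, f b ∂E a ∂μ| ≤ M * tv κ (E ∘ₘ μ) := by
  have hf_int : Integrable f (E ∘ₘ μ) := .of_bound hf.aestronglyMeasurable M <|
    ae_of_all _ fun b => by simpa [abs_of_nonneg (hf₀ b)] using hfM b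
  rw [← integral_comp_eq_integral_integral μ E hf_int]
  exact abs_integral_sub_integral_le_mul_tv _ _ hf hf₀ hfM

lemma isProbabilityMeasure_of_eq_comp {μ : ℕ → Measure α} (K : ℕ → Kernel α α)
    [∀ t, IsMarkovKernel (K t)] [IsProbabilityMeasure (μ 0)] (hμ : ∀ t, μ (t + 1) = K t ∘ₘ μ t)
    (t : ℕ) : IsProbabilityMeasure (μ t) := by
  induction t with
  | zero => infer_instance
  | succ t ih => rw [hμ t]; infer_instance

end Kernel

lemma tv_comp_comp_le {X Z : Type*} [MeasurableSpace X] [MeasurableSpace Z]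
    (P : Kernel X X) (E : Kernel X Z) (F : Kernel Z Z)
    [IsMarkovKernel P] [IsMarkovKernel E] [IsMarkovKernel F]
    (ρ : Measure X) (κ : Measure Z) [IsProbabilityMeasure ρ] [IsProbabilityMeasure κ]
    (hm : Measurable fun x => tv (E ∘ₘ P x) (F ∘ₘ E x)) :
    tv (F ∘ₘ κ) (E ∘ₘ P ∘ₘ ρ) ≤ tv κ (E ∘ₘ ρ) + ∫ x, tv (E ∘ₘ P x) (F ∘ₘ E x) ∂ρ :=
  calc tv (F ∘ₘ κ) (E ∘ₘ P ∘ₘ ρ)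
      ≤ tv (F ∘ₘ κ) (F ∘ₘ E ∘ₘ ρ) + tv (F ∘ₘ E ∘ₘ ρ) (E ∘ₘ P ∘ₘ ρ) := tv_triangle _ _ _
    _ ≤ tv κ (E ∘ₘ ρ) + ∫ x, tv (E ∘ₘ P x) (F ∘ₘ E x) ∂ρ := by
      gcongr
      · exact tv_comp_le_tv _ _ F
      · rw [Measure.comp_assoc, Measure.comp_assoc, tv_comm]
        exact tv_comp_le_integral_tv ρ (E ∘ₖ P) (F ∘ₖ E) hm

lemma tv_latent_le_sum_integral_tv {X Z : Type*} [MeasurableSpace X] [MeasurableSpace Z]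
    (P : ℕ → Kernel X X) (E : Kernel X Z) (F : ℕ → Kernel Z Z)
    [∀ t, IsMarkovKernel (P t)] [IsMarkovKernel E] [∀ t, IsMarkovKernel (F t)]
    {ρ : ℕ → Measure X} {κ : ℕ → Measure Z} [IsProbabilityMeasure (ρ 0)]
    (hρ : ∀ t, ρ (t + 1) = P t ∘ₘ ρ t) (hκ0 : κ 0 = E ∘ₘ ρ 0) (hκ : ∀ t, κ (t + 1) = F t ∘ₘ κ t)
    (hm : ∀ t, Measurable fun x => tv (E ∘ₘ P t x) (F t ∘ₘ E x)) (t : ℕ) :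
    tv (κ t) (E ∘ₘ ρ t) ≤ ∑ s ∈ Finset.range t, ∫ x, tv (E ∘ₘ P s x) (F s ∘ₘ E x) ∂ρ s := by
  have := isProbabilityMeasure_of_eq_comp P hρ
  have : IsProbabilityMeasure (κ 0) := hκ0 ▸ inferInstance
  have := isProbabilityMeasure_of_eq_comp F hκ
  induction t with
  | zero => simp [hκ0]
  | succ t ih =>
    rw [hκ, hρ, Finset.sum_range_succ]
    exact (tv_comp_comp_le (P t) E (F t) _ _ (hm t)).trans (by gcongr)

theorem cost_gap_le_tv_consistency_general
    {X U Z : Type*} [MeasurableSpace X] [MeasurableSpace U] [MeasurableSpace Z]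
    (P : Kernel (X × U) X) [IsMarkovKernel P]
    (Enc : Kernel X Z) [IsMarkovKernel Enc]
    (F : Kernel (Z × U) Z) [IsMarkovKernel F]
    (T : ℕ) (x₀ : X) (u : ℕ → U)
    (cbar : Z × U → ℝ) (hc_meas : Measurable cbar) (cmax : ℝ)
    (hc_nonneg : ∀ zu, 0 ≤ cbar zu) (hc_le : ∀ zu, cbar zu ≤ cmax)
    -- observation marginals under the true dynamics
    (ρ : ℕ → Measure X) (hρ0 : ρ 0 = Measure.dirac x₀)
    (hρ : ∀ t, ρ (t + 1) = (ρ t).bind fun x => P (x, u t))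
    -- latent-model marginals
    (κ : ℕ → Measure Z) (hκ0 : κ 0 = Enc x₀)
    (hκ : ∀ t, κ (t + 1) = (κ t).bind fun z => F (z, u t))
    (htv_meas : ∀ t, Measurable fun x =>
      tv ((P (x, u t)).bind fun x' => Enc x') ((Enc x).bind fun z => F (z, u t))) :
    |(∑ t ∈ Finset.range T, ∫ z, cbar (z, u t) ∂(κ t))
        - ∑ t ∈ Finset.range T, ∫ x, (∫ z, cbar (z, u t) ∂(Enc x)) ∂(ρ t)|
      ≤ (T : ℝ) * cmax * ∑ t ∈ Finset.range T,
          ∫ x, tv ((P (x, u t)).bind fun x' => Enc x')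
            ((Enc x).bind fun z => F (z, u t)) ∂(ρ t) := by
  set ε : ℕ → ℝ := fun t => ∫ x, tv ((P (x, u t)).bind fun x' => Enc x')
    ((Enc x).bind fun z => F (z, u t)) ∂(ρ t)
  have : IsProbabilityMeasure (ρ 0) := hρ0 ▸ inferInstance
  have : IsProbabilityMeasure (κ 0) := hκ0 ▸ inferInstance
  have := isProbabilityMeasure_of_eq_comp (fun t => P.sectL (u t)) hρ
  have := isProbabilityMeasure_of_eq_comp (fun t => F.sectL (u t)) hκ
  have gap (t : ℕ) : tv (κ t) (Enc ∘ₘ ρ t) ≤ ∑ s ∈ Finset.range t, ε s :=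
    tv_latent_le_sum_integral_tv (fun t => P.sectL (u t)) Enc (fun t => F.sectL (u t)) hρ
      (by rw [hκ0, hρ0, Measure.dirac_bind Enc.measurable]) hκ htv_meas t
  have hcmax : 0 ≤ cmax :=
    (hc_nonneg ((nonempty_of_isProbabilityMeasure (Enc x₀)).some, u 0)).trans (hc_le _)
  have step_cost (t : ℕ) (ht : t < T) :
      |∫ z, cbar (z, u t) ∂(κ t) - ∫ x, (∫ z, cbar (z, u t) ∂(Enc x)) ∂(ρ t)|
        ≤ cmax * ∑ s ∈ Finset.range T, ε s := by
    refine (abs_integral_sub_integral_integral_le_mul_tv _ _ Enc (hc_meas.comp (by fun_prop))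
      (fun _ => hc_nonneg _) (fun _ => hc_le _)).trans ?_
    gcongr
    exact (gap t).trans (Finset.sum_le_sum_of_subset_of_nonneg
      (Finset.range_subset_range.2 ht.le) fun s _ _ => integral_nonneg fun x => tv_nonneg _ _)
  calc _ = |∑ t ∈ Finset.range T, (∫ z, cbar (z, u t) ∂(κ t)
          - ∫ x, (∫ z, cbar (z, u t) ∂(Enc x)) ∂(ρ t))| := by rw [Finset.sum_sub_distrib]
    _ ≤ ∑ _t ∈ Finset.range T, cmax * ∑ s ∈ Finset.range T, ε s :=
      (Finset.abs_sum_le_sum_abs _ _).trans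
        (Finset.sum_le_sum fun t ht => step_cost t (Finset.mem_range.1 ht))
    _ = _ := by simp [mul_assoc]

theorem cost_gap_le_tv_consistency
    {X U Z : Type*} [MeasurableSpace X] [MeasurableSpace U] [MeasurableSpace Z]
    (P : Kernel (X × U) X) [IsMarkovKernel P]
    (Enc : Kernel X Z) [IsMarkovKernel Enc]
    (F : Kernel (Z × U) Z) [IsMarkovKernel F]
    (T : ℕ) (hT : 1 ≤ T) (x₀ : X) (u : ℕ → U)
    (cbar : Z × U → ℝ) (hc_meas : Measurable cbar) (cmax : ℝ)
    (hc_nonneg : ∀ zu, 0 ≤ cbar zu) (hc_le : ∀ zu, cbar zu ≤ cmax)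
    -- observation marginals under the true dynamics
    (ρ : ℕ → Measure X) (hρ0 : ρ 0 = Measure.dirac x₀)
    (hρ : ∀ t, ρ (t + 1) = (ρ t).bind fun x => P (x, u t))
    -- latent-model marginals
    (κ : ℕ → Measure Z) (hκ0 : κ 0 = Enc x₀)
    (hκ : ∀ t, κ (t + 1) = (κ t).bind fun z => F (z, u t))
    (htv_meas : ∀ t, Measurable fun x =>
      tv ((P (x, u t)).bind fun x' => Enc x') ((Enc x).bind fun z => F (z, u t))) :
    |(∑ t ∈ Finset.range T, ∫ z, cbar (z, u t) ∂(κ t))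
        - ∑ t ∈ Finset.range T, ∫ x, (∫ z, cbar (z, u t) ∂(Enc x)) ∂(ρ t)|
      ≤ (T : ℝ) * cmax * ∑ t ∈ Finset.range T,
          ∫ x, tv ((P (x, u t)).bind fun x' => Enc x')
            ((Enc x).bind fun z => F (z, u t)) ∂(ρ t) :=
  cost_gap_le_tv_consistency_general P Enc F T x₀ u cbar hc_meas cmax hc_nonneg hc_le ρ hρ0 hρ κ hκ0
    hκ htv_meas
end
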